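/- arXiv:1904.06190 — 5 statements merged into one kernel-verified Lean document; each statement's English description precedes it below -/
import Mathlib

section
/- Let a,b,c,J be real numbers and define the twelve quantities U1 = 3c/2+3J, U2 = (2c+b)/2+J, U3 = (2c+a)/2+J, U4 = (2b+a)/2+J, U5 = (2a+c)/2+J, U6 = 3a/2+3J, U7 = 3b/2+J, U8 = (2b+c)/2, U9 = (2a+b)/2+J, U10 = (a+b+c)/2, U11 = 3b/2+3J, U12 = (2b+c)/2+J. If a ≥ c, b ≥ c, and J ≤ min((a-c)/4, (b-c)/4, (a+b-2c)/6), then U1 = min{U1,...,U12}. -/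
theorem stmt_1 (a b c J : ℝ)
    (ha : a ≥ c) (hb : b ≥ c)
    (hJ : J ≤ min ((a - c) / 4) (min ((b - c) / 4) ((a + b - 2 * c) / 6))) :
    IsLeast ({3 * c / 2 + 3 * J, (2 * c + b) / 2 + J, (2 * c + a) / 2 + J,
      (2 * b + a) / 2 + J, (2 * a + c) / 2 + J, 3 * a / 2 + 3 * J,
      3 * b / 2 + J, (2 * b + c) / 2, (2 * a + b) / 2 + J,
      (a + b + c) / 2, 3 * b / 2 + 3 * J, (2 * b + c) / 2 + J} : Set ℝ)
      (3 * c / 2 + 3 * J) := by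
  have h1 := le_trans hJ (min_le_left _ _)
  have h2 := le_trans hJ (le_trans (min_le_right _ _) (min_le_left _ _))
  have h3 := le_trans hJ (le_trans (min_le_right _ _) (min_le_right _ _))
  constructor
  · left; rfl
  · intro x hx
    simp only [Set.mem_insert_iff, Set.mem_singleton_iff] at hx
    rcases hx with h|h|h|h|h|h|h|h|h|h|h|h <;> subst h <;> linarith
end

section
/- Let a,b,c,J be real numbers with c ≥ a, b ≥ a, and J ≤ min((c-a)/4, (b-a)/4, (b+c-2a)/6). Then U6 = 3a/2 + 3J is the minimum of the twelve quantities U1 = 3c/2+3J, U2 = (2c+b)/2+J, U3 = (2c+a)/2+J, U4 = (2b+a)/2+J, U5 = (2a+c)/2+J, U6 = 3a/2+3J, U7 = 3b/2+J, U8 = (2b+c)/2, U9 = (2a+b)/2+J, U10 = (a+b+c)/2, U11 = 3b/2+3J, U12 = (2b+c)/2+J. -/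
theorem stmt_3 (a b c J : ℝ)
    (hca : c ≥ a) (hba : b ≥ a)
    (hJ : J ≤ min ((c - a) / 4) (min ((b - a) / 4) ((b + c - 2 * a) / 6))) :
    IsLeast ({3 * c / 2 + 3 * J, (2 * c + b) / 2 + J, (2 * c + a) / 2 + J,
      (2 * b + a) / 2 + J, (2 * a + c) / 2 + J, 3 * a / 2 + 3 * J,
      3 * b / 2 + J, (2 * b + c) / 2, (2 * a + b) / 2 + J,
      (a + b + c) / 2, 3 * b / 2 + 3 * J, (2 * b + c) / 2 + J} : Set ℝ)
      (3 * a / 2 + 3 * J) := by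
  obtain ⟨h1, h2, h3⟩ : J ≤ (c - a) / 4 ∧ J ≤ (b - a) / 4 ∧ J ≤ (b + c - 2 * a) / 6 := by
    simp only [le_min_iff] at hJ; tauto
  constructor
  · simp
  · rintro x (rfl|rfl|rfl|rfl|rfl|rfl|rfl|rfl|rfl|rfl|rfl|rfl) <;> nlinarith
end

section
/- Let a,b,c,J be real numbers with c ≥ b, a ≥ b, and J ≤ 0. Then U11 = 3b/2 + 3J satisfies U11 ≤ Uk for all k in {1,...,12}, where U1 = 3c/2+3J, U2 = (2c+b)/2+J, U3 = (2c+a)/2+J, U4 = (2b+a)/2+J, U5 = (2a+c)/2+J, U6 = 3a/2+3J, U7 = 3b/2+J, U8 = (2b+c)/2, U9 = (2a+b)/2+J, U10 = (a+b+c)/2, U12 = (2b+c)/2+J. -/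
theorem stmt_4 (a b c J : ℝ)
    (hcb : c ≥ b) (hab : a ≥ b) (hJ : J ≤ 0) :
    ∀ U ∈ ({3 * c / 2 + 3 * J, (2 * c + b) / 2 + J, (2 * c + a) / 2 + J,
      (2 * b + a) / 2 + J, (2 * a + c) / 2 + J, 3 * a / 2 + 3 * J,
      3 * b / 2 + J, (2 * b + c) / 2, (2 * a + b) / 2 + J,
      (a + b + c) / 2, 3 * b / 2 + 3 * J, (2 * b + c) / 2 + J} : Set ℝ),
      3 * b / 2 + 3 * J ≤ U := by
  intro U hU
  simp only [Set.mem_insert_iff, Set.mem_singleton_iff] at hU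
  rcases hU with h|h|h|h|h|h|h|h|h|h|h|h <;> subst h <;> linarith
end

section
/- Let Υ be a real number with 1 < Υ ≤ 9. Then for every α > 0, the equation αX(Υ+X)² = (1+X)² has exactly one solution X > 0. -/
lemma Qpos (Υ X Y : ℝ) (hΥ1 : 1 < Υ) (hΥ9 : Υ ≤ 9) (hX : 0 < X) (hXY : X < Y) :
    0 < Υ^2+2*Υ*(X+Y)+X^2+X*Y+Y^2+4*Υ*X*Y-Υ^2*X*Y+2*X*Y*(X+Y)+X^2*Y^2 := by
  have hY : 0 < Y := hX.trans hXY
  have h1 : 0 ≤ (Υ - 1) * (9 - Υ) := by nlinarith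
  nlinarith [sq_nonneg (X*Y - Υ), sq_nonneg (X - Y), sq_nonneg (2*X - Υ + 3),
    sq_nonneg (2*Y - Υ + 3), mul_pos hX hY, mul_nonneg (mul_nonneg hX.le hY.le) h1,
    mul_nonneg hX.le h1, mul_nonneg hY.le h1, sq_nonneg (X + Y - Υ + 3)]

lemma no_two (Υ : ℝ) (hΥ1 : 1 < Υ) (hΥ9 : Υ ≤ 9) (X Y : ℝ) (hX : 0 < X)
    (hXY : X < Y) (h : X * (Υ + X) ^ 2 * (1 + Y) ^ 2 = Y * (Υ + Y) ^ 2 * (1 + X) ^ 2) :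
    False := by
  have hQ : 0 < Υ^2+2*Υ*(X+Y)+X^2+X*Y+Y^2+4*Υ*X*Y-Υ^2*X*Y+2*X*Y*(X+Y)+X^2*Y^2 :=
    Qpos Υ X Y hΥ1 hΥ9 hX hXY
  have hfact : (X - Y) * (Υ^2+2*Υ*(X+Y)+X^2+X*Y+Y^2+4*Υ*X*Y-Υ^2*X*Y+2*X*Y*(X+Y)+X^2*Y^2)
      = 0 := by linear_combination h
  have := mul_ne_zero (sub_ne_zero.mpr hXY.ne) hQ.ne'
  exact this hfact

theorem stmt_10 (Υ : ℝ) (hΥ1 : 1 < Υ) (hΥ9 : Υ ≤ 9) (α : ℝ) (hα : 0 < α) :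
    ∃! X : ℝ, 0 < X ∧ α * X * (Υ + X) ^ 2 = (1 + X) ^ 2 := by
  set M : ℝ := max 1 (1/α) with hM
  have hM1 : (1:ℝ) ≤ M := le_max_left _ _
  have hMα : 1/α ≤ M := le_max_right _ _
  have hαM : 1 ≤ α * M := by
    rw [div_le_iff₀ hα] at hMα; linarith [hMα]
  have hcont : ContinuousOn (fun x : ℝ => α * x * (Υ + x) ^ 2 - (1 + x) ^ 2)
      (Set.Icc 0 M) := by
    apply Continuous.continuousOn; continuity
  have h0 : (fun x : ℝ => α * x * (Υ + x) ^ 2 - (1 + x) ^ 2) 0 ≤ 0 := by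
    norm_num
  have hMpos : 0 ≤ (fun x : ℝ => α * x * (Υ + x) ^ 2 - (1 + x) ^ 2) M := by
    simp only
    have h2 : (1 + M)^2 ≤ (Υ + M)^2 := by nlinarith
    have h3 : (1+M)^2 ≤ α * M * (Υ + M)^2 := by
      calc (1+M)^2 = 1 * (1+M)^2 := (one_mul _).symm
        _ ≤ (α * M) * (Υ + M)^2 := by
            apply mul_le_mul hαM h2 (by positivity) (by positivity)
        _ = α * M * (Υ + M)^2 := by ring
    linarith
  obtain ⟨X, hXmem, hXeq⟩ := intermediate_value_Icc (by positivity : (0:ℝ) ≤ M) hcont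
    (Set.mem_Icc.mpr ⟨h0, hMpos⟩)
  have hXeq' : α * X * (Υ + X) ^ 2 = (1 + X) ^ 2 := by
    have := hXeq; simp only at this; linarith [this]
  have hXpos : 0 < X := by
    rcases lt_or_eq_of_le hXmem.1 with h | h
    · exact h
    · exfalso; rw [← h] at hXeq'; norm_num at hXeq'
  refine ⟨X, ⟨hXpos, hXeq'⟩, ?_⟩
  rintro Y ⟨hYpos, hYeq⟩
  by_contra hne
  have key : ∀ A B : ℝ, 0 < A → A < B → α * A * (Υ + A) ^ 2 = (1 + A) ^ 2 →
      α * B * (Υ + B) ^ 2 = (1 + B) ^ 2 → False := by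
    intro A B hA hAB hAe hBe
    apply no_two Υ hΥ1 hΥ9 A B hA hAB
    have h1 : α * (A * (Υ + A) ^ 2 * (1 + B) ^ 2) = (1 + A)^2 * (1+B)^2 := by
      rw [← hAe]; ring
    have h2 : α * (B * (Υ + B) ^ 2 * (1 + A) ^ 2) = (1 + A)^2 * (1+B)^2 := by
      rw [← hBe]; ring
    have := h1.trans h2.symm
    exact mul_left_cancel₀ hα.ne' this
  rcases lt_trichotomy Y X with h | h | h
  · exact key Y X hYpos h hYeq hXeq'
  · exact hne h
  · exact key X Y hXpos h hXeq' hYeq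
end

section
/- Let Υ > 9 be a real number, v₁ < v₂ the two roots of v² + (3-Υ)v + Υ = 0, and define ζᵢ = (1/vᵢ)·((1+vᵢ)/(Υ+vᵢ))² for i = 1,2. If ζ₁ < α < ζ₂, then the equation αX(Υ+X)² = (1+X)² has at least three distinct solutions X > 0. -/
lemma ivt_up (f : ℝ → ℝ) (hf : Continuous f) {a b : ℝ} (hab : a < b)
    (ha : f a < 0) (hb : 0 < f b) : ∃ x ∈ Set.Ioo a b, f x = 0 := by
  have h := intermediate_value_Ioo hab.le hf.continuousOn
  obtain ⟨x, hx, hfx⟩ := h (⟨ha, hb⟩ : (0:ℝ) ∈ Set.Ioo (f a) (f b))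
  exact ⟨x, hx, hfx⟩

lemma ivt_down (f : ℝ → ℝ) (hf : Continuous f) {a b : ℝ} (hab : a < b)
    (ha : 0 < f a) (hb : f b < 0) : ∃ x ∈ Set.Ioo a b, f x = 0 := by
  have h := intermediate_value_Ioo' hab.le hf.continuousOn
  obtain ⟨x, hx, hfx⟩ := h (⟨hb, ha⟩ : (0:ℝ) ∈ Set.Ioo (f b) (f a))
  exact ⟨x, hx, hfx⟩

theorem stmt_11 (Υ α : ℝ) (hΥ : Υ > 9)
    (v₁ v₂ : ℝ)
    (hv₁ : v₁ = (Υ - 3 - Real.sqrt ((Υ - 9) * (Υ - 1))) / 2)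
    (hv₂ : v₂ = (Υ - 3 + Real.sqrt ((Υ - 9) * (Υ - 1))) / 2)
    (ζ₁ ζ₂ : ℝ)
    (hζ₁ : ζ₁ = (1 / v₁) * ((1 + v₁) / (Υ + v₁)) ^ 2)
    (hζ₂ : ζ₂ = (1 / v₂) * ((1 + v₂) / (Υ + v₂)) ^ 2)
    (hα₁ : ζ₁ < α) (hα₂ : α < ζ₂) :
    ∃ x y z : ℝ, 0 < x ∧ 0 < y ∧ 0 < z ∧ x ≠ y ∧ x ≠ z ∧ y ≠ z ∧
      α * x * (Υ + x) ^ 2 = (1 + x) ^ 2 ∧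
      α * y * (Υ + y) ^ 2 = (1 + y) ^ 2 ∧
      α * z * (Υ + z) ^ 2 = (1 + z) ^ 2 := by
  set s := Real.sqrt ((Υ - 9) * (Υ - 1)) with hs
  have hsq : s ^ 2 = (Υ - 9) * (Υ - 1) := by
    rw [hs, Real.sq_sqrt (by nlinarith)]
  have hspos : 0 < s := Real.sqrt_pos.mpr (by nlinarith)
  have hslt : s < Υ - 3 := by nlinarith [hspos, hsq]
  have hv1pos : 0 < v₁ := by rw [hv₁]; linarith
  have hv12 : v₁ < v₂ := by rw [hv₁, hv₂]; linarith
  have hv2pos : 0 < v₂ := lt_trans hv1pos hv12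
  have hYv1 : 0 < Υ + v₁ := by linarith
  have hYv2 : 0 < Υ + v₂ := by linarith
  have hz1 : ζ₁ * (v₁ * (Υ + v₁) ^ 2) = (1 + v₁) ^ 2 := by
    rw [hζ₁]; field_simp
  have hz2 : ζ₂ * (v₂ * (Υ + v₂) ^ 2) = (1 + v₂) ^ 2 := by
    rw [hζ₂]; field_simp
  have hz1pos : 0 < ζ₁ := by
    rw [hζ₁]; positivity
  have hαpos : 0 < α := lt_trans hz1pos hα₁
  set f : ℝ → ℝ := fun x => α * x * (Υ + x) ^ 2 - (1 + x) ^ 2 with hf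
  have hcont : Continuous f := by fun_prop
  have hf0 : f 0 < 0 := by norm_num [hf]
  have hfv1 : 0 < f v₁ := by
    have h : f v₁ = (α - ζ₁) * (v₁ * (Υ + v₁) ^ 2) := by
      simp only [hf]; linear_combination hz1
    rw [h]
    have : 0 < α - ζ₁ := by linarith
    positivity
  have hfv2 : f v₂ < 0 := by
    have h : f v₂ = (α - ζ₂) * (v₂ * (Υ + v₂) ^ 2) := by
      simp only [hf]; linear_combination hz2
    rw [h]
    exact mul_neg_of_neg_of_pos (by linarith) (by positivity)
  set M : ℝ := max (v₂ + 1) (2 / α) with hM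
  have hMv2 : v₂ < M := lt_of_lt_of_le (by linarith) (le_max_left _ _)
  have hMpos : 0 < M := lt_trans hv2pos hMv2
  have hαM : 2 ≤ α * M := by
    have h2 : 2 / α ≤ M := le_max_right _ _
    calc 2 = α * (2 / α) := by field_simp
    _ ≤ α * M := by nlinarith
  have hfM : 0 < f M := by
    simp only [hf]
    nlinarith [sq_nonneg (1 + M), sq_nonneg (Υ + M), hαM, hMpos]
  obtain ⟨x, hx, hfx⟩ := ivt_up f hcont hv1pos hf0 hfv1
  obtain ⟨y, hy, hfy⟩ := ivt_down f hcont hv12 hfv1 hfv2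
  obtain ⟨z, hz, hfz⟩ := ivt_up f hcont hMv2 hfv2 hfM
  refine ⟨x, y, z, hx.1, lt_trans hv1pos hy.1, lt_trans hv2pos hz.1,
    ne_of_lt (lt_trans hx.2 hy.1), ne_of_lt (lt_trans hx.2 (lt_trans hv12 hz.1)),
    ne_of_lt (lt_trans hy.2 hz.1), ?_, ?_, ?_⟩ <;>
    [ (have := hfx); (have := hfy); (have := hfz)] <;>
    simp only [hf] at this <;> linarith
end
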